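/- Let e₁ and e₂ be REwLA terms over the set A of term variables, let V be the finite set of term variables occurring in e₁ or e₂, and let end' := (Σ_{a∈V} a^{∩i̅d})ᵃ (an REwLA+ term). Then SL(e₁) = SL(e₂) if and only if the equation e₁;end' = e₂;end' is valid on GRELfinlin, i.e., ⟦e₁;end'⟧ˢ = ⟦e₂;end'⟧ˢ for every generalized structure S whose universal relation is a finite linear order. -/

import Mathlib

/-! Statement 2: equivalence of languages with substitutions coincides with
validity of `e₁;end' = e₂;end'` on GRELfinlin, where
`end' = (Σ_{a∈V} a^{∩i̅d})ᵃ` is an REwLA+ term. -/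

/-- A generalized structure over term variables `A` and formula variables `P`,
with universe `W`. -/
structure GStruct (A P W : Type) where
  U : W → W → Prop
  rel : A → W → W → Prop
  rel_sub : ∀ a x y, rel a x y → U x y
  val : P → W → Prop

/-- The universal relation is a finite linear order (on a nonempty finite universe). -/
def FinLin {A P W : Type} (S : GStruct A P W) : Prop :=
  Nonempty W ∧ Finite W ∧ (∀ x, S.U x x) ∧
    (∀ x y z, S.U x y → S.U y z → S.U x z) ∧
    (∀ x y, S.U x y → S.U y x → x = y) ∧ (∀ x y, S.U x y ∨ S.U y x)

/-- Regular expressions with lookahead (REwLA). -/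
inductive RE (A : Type) : Type where
  | var : A → RE A
  | one : RE A
  | zero : RE A
  | comp : RE A → RE A → RE A
  | union : RE A → RE A → RE A
  | plus : RE A → RE A
  | adom : RE A → RE A

/-- Extended regular expressions with lookahead (REwLA+): REwLA together with the
restrictions to the identity (`capId`) and to its complement (`capNid`). -/
inductive REP (A : Type) : Type where
  | var : A → REP A
  | one : REP A
  | zero : REP A
  | comp : REP A → REP A → REP A
  | union : REP A → REP A → REP A
  | plus : REP A → REP A
  | adom : REP A → REP A
  | capId : REP A → REP A
  | capNid : REP A → REP A

/-- The evident embedding of REwLA into REwLA+. -/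
def RE.toREP {A : Type} : RE A → REP A
  | .var a => .var a
  | .one => .one
  | .zero => .zero
  | .comp e f => .comp e.toREP f.toREP
  | .union e f => .union e.toREP f.toREP
  | .plus e => .plus e.toREP
  | .adom e => .adom e.toREP

/-- Relational semantics of REwLA+ terms, given an interpretation `ρ` of term variables. -/
def repSem {A W : Type} (ρ : A → W → W → Prop) : REP A → W → W → Prop
  | .var a => ρ a
  | .one => fun x y => x = y
  | .zero => fun _ _ => False
  | .comp e f => fun x z => ∃ y, repSem ρ e x y ∧ repSem ρ f y z
  | .union e f => fun x y => repSem ρ e x y ∨ repSem ρ f x y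
  | .plus e => fun x y => Relation.TransGen (fun u v => repSem ρ e u v) x y
  | .adom e => fun x y => x = y ∧ ∀ z, ¬ repSem ρ e x z
  | .capId e => fun x y => repSem ρ e x y ∧ x = y
  | .capNid e => fun x y => repSem ρ e x y ∧ x ≠ y

/-- Interpretation of term variables in the word structure `S^w`. -/
def wordRel {A : Type} (w : List A) (a : A) (i j : Fin (w.length + 1)) : Prop :=
  (j : ℕ) = (i : ℕ) + 1 ∧ w[(i : ℕ)]? = some a

/-- The language of an REwLA term. -/
def reLang {A : Type} (e : RE A) : Set (List A) :=
  {w | repSem (wordRel w) e.toREP 0 (Fin.last w.length)}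

/-- Applying a substitution (of REwLA terms for term variables) to an REwLA term. -/
def reSubst {A : Type} (θ : A → RE A) : RE A → RE A
  | .var a => θ a
  | .one => .one
  | .zero => .zero
  | .comp e f => .comp (reSubst θ e) (reSubst θ f)
  | .union e f => .union (reSubst θ e) (reSubst θ f)
  | .plus e => .plus (reSubst θ e)
  | .adom e => .adom (reSubst θ e)

/-- The language with substitutions `SL(e) = ⋃_θ {θ} × L(eθ)`. -/
def SL {A : Type} (e : RE A) : Set ((A → RE A) × List A) :=
  {q | q.2 ∈ reLang (reSubst q.1 e)}

/-- The list of term variables occurring in an REwLA term. -/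
def reVars {A : Type} : RE A → List A
  | .var a => [a]
  | .one => []
  | .zero => []
  | .comp e f => reVars e ++ reVars f
  | .union e f => reVars e ++ reVars f
  | .plus e => reVars e
  | .adom e => reVars e

/-- The sum `0 + a₁^{∩i̅d} + ⋯ + aₖ^{∩i̅d}` over a list of term variables. -/
def sumCapNid {A : Type} (l : List A) : REP A :=
  l.foldr (fun a t => REP.union (REP.capNid (REP.var a)) t) REP.zero


/-!
The substitution lemma turns `(θ, w) ∈ SL e` into `e` holding from the first to the last point of
the finite linear structure on the positions of `w` in which each `a` denotes `⟦θ a⟧`. There all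
relations point forward, so `end'` holds at the last point: validity gives `SL e₁ = SL e₂`.
Conversely, let `end'` hold at `y` in a finite linear structure, i.e. no variable of `e₁, e₂`
leaves `y` except by a loop. The points above `x` form a substructure closed under these
variables, and moving `y` to its top keeps them forward. Enumerating it as the positions of a
word (`x` first, `y` last), each such relation is definable over the word from single positions,
which are expressible by lookahead; this is a substitution `θ` with `⟦e⟧(x, y) ↔ (θ, w) ∈ SL e`.
-/
section Semantics

variable {A : Type}

theorem repSem_le {W : Type} {ρ : A → W → W → Prop} {U : W → W → Prop}
    (hrefl : ∀ x, U x x) (htrans : ∀ x y z, U x y → U y z → U x z) (hρ : ∀ a, ρ a ≤ U) :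
    ∀ t : REP A, repSem ρ t ≤ U
  | .var a => hρ a
  | .one => fun x _ h => h ▸ hrefl x
  | .zero => fun _ _ h => h.elim
  | .comp e f => fun _ _ ⟨_, h₁, h₂⟩ => htrans _ _ _ (repSem_le hrefl htrans hρ e _ _ h₁)
      (repSem_le hrefl htrans hρ f _ _ h₂)
  | .union e f => fun _ _ h => h.elim (repSem_le hrefl htrans hρ e _ _)
      (repSem_le hrefl htrans hρ f _ _)
  | .plus e => fun _ _ h => by
      induction h with
      | single h => exact repSem_le hrefl htrans hρ e _ _ h
      | tail _ h ih => exact htrans _ _ _ ih (repSem_le hrefl htrans hρ e _ _ h)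
  | .adom _ => fun x _ h => h.1 ▸ hrefl x
  | .capId _ => fun x _ h => h.2 ▸ hrefl x
  | .capNid e => fun _ _ h => repSem_le hrefl htrans hρ e _ _ h.1

theorem repSem_toREP_congr {W : Type} {ρ ρ' : A → W → W → Prop} :
    ∀ e : RE A, (∀ a ∈ reVars e, ρ a = ρ' a) → repSem ρ e.toREP = repSem ρ' e.toREP
  | .var a, h => h a (List.mem_singleton_self a)
  | .one, _ => rfl
  | .zero, _ => rfl
  | .comp e f, h => by
      have he := repSem_toREP_congr e fun a ha => h a (List.mem_append_left _ ha)
      have hf := repSem_toREP_congr f fun a ha => h a (List.mem_append_right _ ha)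
      simp only [RE.toREP, repSem, he, hf]
  | .union e f, h => by
      have he := repSem_toREP_congr e fun a ha => h a (List.mem_append_left _ ha)
      have hf := repSem_toREP_congr f fun a ha => h a (List.mem_append_right _ ha)
      simp only [RE.toREP, repSem, he, hf]
  | .plus e, h => by simp only [RE.toREP, repSem, repSem_toREP_congr e h]
  | .adom e, h => by simp only [RE.toREP, repSem, repSem_toREP_congr e h]

theorem repSem_reSubst {W : Type} (ρ : A → W → W → Prop) (θ : A → RE A) :
    ∀ e : RE A, repSem ρ (reSubst θ e).toREP = repSem (fun a => repSem ρ (θ a).toREP) e.toREP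
  | .var _ => rfl
  | .one => rfl
  | .zero => rfl
  | .comp e f => by
      simp only [reSubst, RE.toREP, repSem, repSem_reSubst ρ θ e, repSem_reSubst ρ θ f]
  | .union e f => by
      simp only [reSubst, RE.toREP, repSem, repSem_reSubst ρ θ e, repSem_reSubst ρ θ f]
  | .plus e => by simp only [reSubst, RE.toREP, repSem, repSem_reSubst ρ θ e]
  | .adom e => by simp only [reSubst, RE.toREP, repSem, repSem_reSubst ρ θ e]

theorem Relation.TransGen.of_onFun {α β : Type} {r : β → β → Prop} {f : α → β}
    (hf : ∀ a b, r (f a) b → b ∈ Set.range f) {a a' : α} (h : Relation.TransGen r (f a) (f a')) :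
    Relation.TransGen (Function.onFun r f) a a' := by
  suffices ∀ b, Relation.TransGen r b (f a') → ∀ a, f a = b →
      Relation.TransGen (Function.onFun r f) a a' from this _ h a rfl
  intro b hb
  induction hb using Relation.TransGen.head_induction_on with
  | single h => rintro a rfl; exact .single h
  | head h _ ih =>
      rintro a rfl
      obtain ⟨c, rfl⟩ := hf a _ h
      exact .head h (ih c rfl)

theorem repSem_iff_of_injective {M W : Type} {ρ : A → W → W → Prop} {ρ' : A → M → M → Prop}
    (f : M → W) (hf : Function.Injective f) (hclosed : ∀ a m v, ρ a (f m) v → v ∈ Set.range f)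
    (hρ : ∀ a m m', ρ' a m m' ↔ ρ a (f m) (f m')) :
    ∀ (t : REP A) (m m' : M), repSem ρ' t m m' ↔ repSem ρ t (f m) (f m') := by
  have hclosedT : ∀ t, repSem ρ t ≤ fun v v' => v ∈ Set.range f → v' ∈ Set.range f :=
    repSem_le (fun _ => id) (fun _ _ _ h₁ h₂ => h₂ ∘ h₁)
      fun a _ _ h ⟨m, hm⟩ => hclosed a m _ (hm ▸ h)
  intro t
  induction t with
  | var a => exact hρ a
  | one => exact fun m m' => hf.eq_iff.symm
  | zero => exact fun _ _ => Iff.rfl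
  | comp e g ihe ihg =>
      refine fun m m' => ⟨fun ⟨k, h₁, h₂⟩ => ⟨f k, (ihe _ _).1 h₁, (ihg _ _).1 h₂⟩, ?_⟩
      rintro ⟨v, h₁, h₂⟩
      obtain ⟨k, rfl⟩ := hclosedT e _ _ h₁ ⟨m, rfl⟩
      exact ⟨k, (ihe _ _).2 h₁, (ihg _ _).2 h₂⟩
  | union e g ihe ihg => exact fun m m' => or_congr (ihe m m') (ihg m m')
  | plus e ih =>
      have hon : repSem ρ' e = Function.onFun (repSem ρ e) f :=
        funext₂ fun m m' => propext (ih m m')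
      intro m m'
      change Relation.TransGen _ m m' ↔ Relation.TransGen _ (f m) (f m')
      rw [hon]
      exact ⟨Relation.TransGen.lift f (fun _ _ => id) _ _,
        Relation.TransGen.of_onFun fun _ _ h => hclosedT e _ _ h ⟨_, rfl⟩⟩
  | adom e ih =>
      refine fun m m' =>
        and_congr hf.eq_iff.symm ⟨fun h v hv => ?_, fun h k hk => h _ ((ih _ _).1 hk)⟩
      obtain ⟨k, rfl⟩ := hclosedT e _ _ hv ⟨m, rfl⟩
      exact h k ((ih _ _).2 hv)
  | capId e ih => exact fun m m' => and_congr (ih m m') hf.eq_iff.symm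
  | capNid e ih => exact fun m m' => and_congr (ih m m') hf.ne_iff.symm

theorem repSem_sumCapNid {W : Type} (ρ : A → W → W → Prop) (l : List A) (u v : W) :
    repSem ρ (sumCapNid l) u v ↔ ∃ a ∈ l, ρ a u v ∧ u ≠ v := by
  induction l with
  | nil => simp [sumCapNid, repSem]
  | cons a l ih =>
      simp only [sumCapNid, List.foldr_cons, repSem] at *
      rw [ih]
      simp

theorem repSem_comp_adom_sumCapNid {W : Type} (ρ : A → W → W → Prop) (l : List A) (t : REP A)
    (x y : W) :
    repSem ρ (.comp t (.adom (sumCapNid l))) x y ↔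
      repSem ρ t x y ∧ ∀ a ∈ l, ∀ z, ρ a y z → z = y := by
  simp only [repSem, repSem_sumCapNid]
  constructor
  · rintro ⟨_, h, rfl, hend⟩
    exact ⟨h, fun a ha z hz => by_contra fun hzy => hend z ⟨a, ha, hz, Ne.symm hzy⟩⟩
  · rintro ⟨h, hend⟩
    exact ⟨y, h, rfl, fun z ⟨a, ha, hz, hyz⟩ => hyz (hend a ha z hz).symm⟩

end Semantics

section Word

variable {A : Type}

namespace RE

def sum : List (RE A) → RE A
  | [] => .zero
  | t :: ts => .union t (sum ts)

def pow (t : RE A) : ℕ → RE A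
  | 0 => .one
  | k + 1 => .comp t (pow t k)

theorem repSem_sum {W : Type} (ρ : A → W → W → Prop) (ts : List (RE A)) (x y : W) :
    repSem ρ (sum ts).toREP x y ↔ ∃ t ∈ ts, repSem ρ t.toREP x y := by
  induction ts with
  | nil => simp [sum, toREP, repSem]
  | cons t ts ih =>
      change repSem ρ t.toREP x y ∨ repSem ρ (sum ts).toREP x y ↔ _
      simp [ih]

end RE

theorem repSem_adom_adom {W : Type} (ρ : A → W → W → Prop) (t : REP A) (x y : W) :
    repSem ρ (.adom (.adom t)) x y ↔ x = y ∧ ∃ z, repSem ρ t x z := by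
  simp [repSem]

def wordStep (w : List A) : RE A :=
  RE.sum (w.map RE.var)

/-- The test for position `k`: from it, exactly `|w| - k` steps lead to the last position. -/
def wordPosTest (w : List A) (k : ℕ) : RE A :=
  .adom (.adom (.comp ((wordStep w).pow (w.length - k)) (.adom (wordStep w))))

def wordPair (w : List A) (i j : ℕ) : RE A :=
  .comp (wordPosTest w i) ((wordStep w).pow (j - i))

variable (w : List A)

theorem repSem_wordRel_le (t : REP A) : repSem (wordRel w) t ≤ (· ≤ ·) :=
  repSem_le (ρ := wordRel w) le_refl (fun _ _ _ => le_trans)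
    (fun _ _ _ h => Fin.le_def.2 (h.1 ▸ Nat.le_succ _)) t

theorem repSem_wordStep (i j : Fin (w.length + 1)) :
    repSem (wordRel w) (wordStep w).toREP i j ↔ (j : ℕ) = i + 1 := by
  simp only [wordStep, RE.repSem_sum, List.mem_map, exists_exists_and_eq_and, RE.toREP, repSem,
    wordRel]
  refine ⟨fun ⟨_, _, h, _⟩ => h, fun h => ?_⟩
  have hi : (i : ℕ) < w.length := by omega
  exact ⟨w[(i : ℕ)], List.getElem_mem hi, h, List.getElem?_eq_getElem hi⟩

theorem repSem_pow_wordStep (k : ℕ) (i j : Fin (w.length + 1)) :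
    repSem (wordRel w) ((wordStep w).pow k).toREP i j ↔ (j : ℕ) = i + k := by
  induction k generalizing i with
  | zero => exact Fin.ext_iff.trans eq_comm
  | succ k ih =>
      change (∃ m, _ ∧ _) ↔ _
      simp only [repSem_wordStep, ih]
      refine ⟨fun ⟨m, hm, hj⟩ => by omega, fun hj => ⟨⟨i + 1, by omega⟩, rfl, by simp only; omega⟩⟩

theorem repSem_wordPosTest {k : ℕ} (hk : k ≤ w.length) (i j : Fin (w.length + 1)) :
    repSem (wordRel w) (wordPosTest w k).toREP i j ↔ i = j ∧ (i : ℕ) = k := by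
  have hend : ∀ l : Fin (w.length + 1), (∀ z, ¬ repSem (wordRel w) (wordStep w).toREP l z) ↔
      (l : ℕ) = w.length := fun l => by
    simp only [repSem_wordStep]
    refine ⟨fun h => by_contra fun hl => h ⟨l + 1, by omega⟩ rfl, fun hl z hz => by omega⟩
  change repSem _ (.adom (.adom _)) i j ↔ _
  rw [repSem_adom_adom]
  refine and_congr_right fun _ => ⟨fun ⟨z, l, hl, hlz, hz⟩ => ?_, fun hi => ?_⟩
  · rw [repSem_pow_wordStep] at hl
    rw [hend] at hz
    omega
  · refine ⟨Fin.last _, Fin.last _, ?_, rfl, (hend _).2 rfl⟩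
    rw [repSem_pow_wordStep, Fin.val_last]
    omega

theorem repSem_wordPair {p q : Fin (w.length + 1)} (hpq : p ≤ q) (u v : Fin (w.length + 1)) :
    repSem (wordRel w) (wordPair w p q).toREP u v ↔ u = p ∧ v = q := by
  change (∃ m, _ ∧ _) ↔ _
  simp only [repSem_wordPosTest w (Nat.lt_succ_iff.1 p.2), repSem_pow_wordStep, Fin.ext_iff,
    Fin.le_def] at hpq ⊢
  constructor
  · rintro ⟨m, ⟨hm, hu⟩, hv⟩
    omega
  · rintro ⟨hu, hv⟩
    exact ⟨u, ⟨rfl, hu⟩, by omega⟩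

theorem exists_repSem_wordRel_eq (R : Fin (w.length + 1) → Fin (w.length + 1) → Prop)
    (hR : R ≤ (· ≤ ·)) : ∃ t : RE A, repSem (wordRel w) t.toREP = R := by
  classical
  refine ⟨RE.sum ((Finset.univ.filter fun p : Fin _ × Fin _ => R p.1 p.2).toList.map
    fun p => wordPair w p.1 p.2), funext₂ fun u v => propext ?_⟩
  simp only [RE.repSem_sum, List.mem_map, exists_exists_and_eq_and, Finset.mem_toList,
    Finset.mem_filter, Finset.mem_univ, true_and]
  constructor
  · rintro ⟨⟨p, q⟩, hpq, h⟩
    obtain ⟨rfl, rfl⟩ := (repSem_wordPair w (hR _ _ hpq) u v).1 h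
    exact hpq
  · exact fun h => ⟨(u, v), h, (repSem_wordPair w (hR _ _ h) u v).2 ⟨rfl, rfl⟩⟩

end Word

section Substitution

variable {A : Type}

theorem mem_SL_iff (e : RE A) (θ : A → RE A) (w : List A) :
    (θ, w) ∈ SL e ↔
      repSem (fun a => repSem (wordRel w) (θ a).toREP) e.toREP 0 (Fin.last w.length) := by
  change repSem _ (reSubst θ e).toREP _ _ ↔ _
  rw [repSem_reSubst]

def substStructure (P : Type) (θ : A → RE A) (w : List A) :
    GStruct A P (Fin (w.length + 1)) where
  U := (· ≤ ·)
  rel a := repSem (wordRel w) (θ a).toREP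
  rel_sub a := repSem_wordRel_le w (θ a).toREP
  val _ _ := False

theorem finLin_substStructure (P : Type) (θ : A → RE A) (w : List A) :
    FinLin (substStructure P θ w) :=
  ⟨⟨0⟩, inferInstance, le_refl, fun _ _ _ => le_trans, fun _ _ => le_antisymm, le_total⟩

theorem exists_subst_of_isBot_of_isTop {M : Type} [LinearOrder M] [Fintype M]
    (ρ : A → M → M → Prop) (hρ : ∀ a, ρ a ≤ (· ≤ ·)) {x y : M} (hx : IsBot x) (hy : IsTop y)
    (w : List A) (hw : Fintype.card M = w.length + 1) :
    ∃ θ : A → RE A, ∀ e : RE A, repSem ρ e.toREP x y ↔ (θ, w) ∈ SL e := by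
  let g : Fin (w.length + 1) ≃o M := Fintype.orderIsoFinOfCardEq M hw
  choose θ hθ using fun a =>
    exists_repSem_wordRel_eq w (fun i j => ρ a (g i) (g j)) fun i j h => g.le_iff_le.1 (hρ a _ _ h)
  have hg₀ : g 0 = x := le_antisymm (g.le_symm_apply.1 (Fin.zero_le _)) (hx _)
  have hg₁ : g (Fin.last _) = y := le_antisymm (hy _) (g.symm_apply_le.1 (Fin.le_last _))
  refine ⟨θ, fun e => ?_⟩
  rw [mem_SL_iff, ← hg₀, ← hg₁]
  exact (repSem_iff_of_injective g g.injective (fun _ _ v _ => ⟨g.symm v, g.apply_symm_apply v⟩)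
    (fun a i j => by rw [hθ a]) e.toREP 0 (Fin.last _)).symm

end Substitution

section FinLin

variable {A P W : Type}

noncomputable abbrev FinLin.linearOrder {S : GStruct A P W} (hS : FinLin S) : LinearOrder W where
  le := S.U
  le_refl := hS.2.2.1
  le_trans := hS.2.2.2.1
  le_antisymm := hS.2.2.2.2.1
  le_total := hS.2.2.2.2.2
  toDecidableLE := Classical.decRel _

noncomputable abbrev FinLin.moveTop {S : GStruct A P W} (hS : FinLin S) (y : W) : LinearOrder W :=
  letI := hS.linearOrder
  LinearOrder.lift' (fun z => toLex (decide (z = y), z))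
    fun _ _ h => congrArg (fun p => (ofLex p).2) h

theorem FinLin.moveTop_le_iff {S : GStruct A P W} (hS : FinLin S) (y u v : W) :
    (hS.moveTop y).le u v ↔ v = y ∨ (u ≠ y ∧ S.U u v) := by
  let := hS.linearOrder
  change toLex (decide (u = y), u) ≤ toLex (decide (v = y), v) ↔ _
  rw [Prod.Lex.toLex_le_toLex]
  by_cases hu : u = y <;> by_cases hv : v = y <;> simp [hu, hv]
  exact Iff.rfl

theorem exists_subst_of_finLin (S : GStruct A P W) (hS : FinLin S) (L : List A) {x y : W}
    (hy : ∀ a ∈ L, ∀ z, S.rel a y z → z = y) (hA : x = y ∨ Nonempty A) :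
    ∃ θ w, ∀ e : RE A, (∀ a ∈ reVars e, a ∈ L) → (repSem S.rel e.toREP x y ↔ (θ, w) ∈ SL e) := by
  classical
  let := hS.moveTop y
  have : Finite W := hS.2.1
  let Z := {z : W // z = y ∨ (x ≠ y ∧ S.U x z)}
  have : Fintype Z := Fintype.ofFinite Z
  have hle : ∀ u v : Z, u ≤ v ↔ v.1 = y ∨ (u.1 ≠ y ∧ S.U u v) := fun u v =>
    hS.moveTop_le_iff y u v
  let ρ : A → W → W → Prop := fun a u v => a ∈ L ∧ S.rel a u v
  have hclosed : ∀ a u v, ρ a u v → u = y ∨ (x ≠ y ∧ S.U x u) → v = y ∨ (x ≠ y ∧ S.U x v) := by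
    rintro a u v ⟨ha, huv⟩ (rfl | ⟨hx, hu⟩)
    · exact .inl (hy a ha v huv)
    · exact .inr ⟨hx, hS.2.2.2.1 _ _ _ hu (S.rel_sub a u v huv)⟩
  have hρ : ∀ a, (fun u v : Z => ρ a u v) ≤ (· ≤ ·) := by
    rintro a ⟨u, _⟩ ⟨v, _⟩ ⟨ha, huv⟩
    rw [hle]
    by_cases huy : u = y
    · subst huy
      exact .inl (hy a ha v huv)
    · exact or_iff_not_imp_left.2 fun _ => ⟨huy, S.rel_sub a u v huv⟩
  let x' : Z := ⟨x, (em (x = y)).imp id fun h => ⟨h, hS.2.2.1 x⟩⟩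
  let y' : Z := ⟨y, .inl rfl⟩
  have hx' : IsBot x' := fun z => (hle _ _).2 z.2
  have hy' : IsTop y' := fun z => (hle _ _).2 (.inl rfl)
  obtain ⟨w, hw⟩ : ∃ w : List A, Fintype.card Z = w.length + 1 := by
    rcases hA with rfl | hA
    · exact ⟨[], Fintype.card_eq_one_iff.2 ⟨y', fun z => Subtype.ext (z.2.resolve_right
        fun h => h.1 rfl)⟩⟩
    · obtain ⟨a₀⟩ := hA
      have := Fintype.card_pos_iff.2 ⟨y'⟩
      exact ⟨List.replicate (Fintype.card Z - 1) a₀, by rw [List.length_replicate]; omega⟩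
  obtain ⟨θ, hθ⟩ := exists_subst_of_isBot_of_isTop _ hρ hx' hy' w hw
  refine ⟨θ, w, fun e he => ?_⟩
  rw [← hθ, repSem_iff_of_injective Subtype.val Subtype.val_injective
    (fun a u v h => ⟨⟨v, hclosed a u v h u.2⟩, rfl⟩) (fun _ _ _ => Iff.rfl),
    repSem_toREP_congr e fun a ha => funext₂ fun _ _ => propext (and_iff_right (he a ha)).symm]

end FinLin

theorem SL_equiv_iff_valid_on_finlin {A P : Type} [DecidableEq A] (e₁ e₂ : RE A)
    (endT : REP A)
    (hend : endT = REP.adom (sumCapNid ((reVars e₁ ++ reVars e₂).dedup))) :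
    SL e₁ = SL e₂ ↔
      ∀ (W : Type) (S : GStruct A P W), FinLin S →
        ∀ x y : W,
          repSem S.rel (REP.comp e₁.toREP endT) x y ↔
            repSem S.rel (REP.comp e₂.toREP endT) x y := by
  subst hend
  set V := (reVars e₁ ++ reVars e₂).dedup
  have hV₁ : ∀ a ∈ reVars e₁, a ∈ V := fun a ha => List.mem_dedup.2 (List.mem_append_left _ ha)
  have hV₂ : ∀ a ∈ reVars e₂, a ∈ V := fun a ha => List.mem_dedup.2 (List.mem_append_right _ ha)
  simp only [repSem_comp_adom_sumCapNid]
  constructor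
  · intro hSL W S hS x y
    refine and_congr_left fun hy => ?_
    by_cases hA : x = y ∨ Nonempty A
    · obtain ⟨θ, w, h⟩ := exists_subst_of_finLin S hS V hy hA
      rw [h e₁ hV₁, h e₂ hV₂, hSL]
    · have hnot : ∀ e : RE A, ¬ repSem S.rel e.toREP x y := fun e he => hA <| .inl <|
        repSem_le (U := Eq) (fun _ => rfl) (fun _ _ _ => Eq.trans)
          (fun a => (not_nonempty_iff.1 (not_or.1 hA).2).elim a) _ _ _ he
      exact iff_of_false (hnot e₁) (hnot e₂)
  · intro hval
    ext ⟨θ, w⟩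
    have hlast : ∀ a ∈ V, ∀ z, repSem (wordRel w) (θ a).toREP (Fin.last _) z → z = Fin.last _ :=
      fun a _ z h => Fin.last_le_iff.1 (repSem_wordRel_le w _ _ _ h)
    have h := hval _ (substStructure P θ w) (finLin_substStructure P θ w) 0 (Fin.last _)
    simp only [← mem_SL_iff, substStructure] at h
    rwa [and_iff_left hlast, and_iff_left hlast] at h
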